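/- Let ℰ_m = E_max - E_m ≥ 0 be the remaining battery capacity, Φ_m ≥ 0 the harvesting upper bound, g_max ≥ 0, and prices η > κ ≥ 0, V, T, β > 0. Consider minimizing D₁(g, ϑ) = (V·T·β·η - ℰ_m)·g + (V·T·β·κ - ℰ_m)·ϑ over 0 ≤ ϑ ≤ Φ_m, 0 ≤ g ≤ g_max, ϑ + g ≤ ℰ_m. If V·T·β·κ - ℰ_m < 0 then the optimal harvested amount is ϑ* = min(Φ_m, ℰ_m); and the optimal purchased amount is g* = min(ℰ_m - ϑ*, g_max) if V·T·β·η - ℰ_m < 0 and g* = 0 otherwise. -/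
import Mathlib


/-- Large-timescale energy management (subproblem P3): minimizing
`D₁(g, ϑ) = (V T β η - ℰ) g + (V T β κ - ℰ) ϑ` over `0 ≤ ϑ ≤ Φ`,
`0 ≤ g ≤ g_max`, `ϑ + g ≤ ℰ` with prices `η > κ ≥ 0` and
`V T β κ - ℰ < 0`: the optimum is `ϑ* = min Φ ℰ` and
`g* = min (ℰ - ϑ*) g_max` if `V T β η - ℰ < 0`, else `g* = 0`. -/
theorem stmt_12 (ℰ Φ gmax η κ V T β : ℝ) (hℰ : 0 ≤ ℰ) (hΦ : 0 ≤ Φ)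
    (hgmax : 0 ≤ gmax) (hκ : 0 ≤ κ) (hηκ : κ < η) (hV : 0 < V) (hT : 0 < T)
    (hβ : 0 < β) (hcond : V * T * β * κ - ℰ < 0) :
    let D₁ : ℝ → ℝ → ℝ :=
      fun g ϑ => (V * T * β * η - ℰ) * g + (V * T * β * κ - ℰ) * ϑ
    let ϑs : ℝ := min Φ ℰ
    let gs : ℝ := if V * T * β * η - ℰ < 0 then min (ℰ - ϑs) gmax else 0
    (0 ≤ ϑs ∧ ϑs ≤ Φ ∧ 0 ≤ gs ∧ gs ≤ gmax ∧ ϑs + gs ≤ ℰ) ∧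
      ∀ g ϑ : ℝ, 0 ≤ ϑ → ϑ ≤ Φ → 0 ≤ g → g ≤ gmax → ϑ + g ≤ ℰ →
        D₁ gs ϑs ≤ D₁ g ϑ := by
  intro D₁ ϑs gs
  have hAB : V * T * β * κ - ℰ < V * T * β * η - ℰ := by
    have : 0 < V * T * β := by positivity
    nlinarith
  have hϑs0 : 0 ≤ ϑs := le_min hΦ hℰ
  have hϑsΦ : ϑs ≤ Φ := min_le_left _ _
  have hϑsE : ϑs ≤ ℰ := min_le_right _ _
  have hgs0 : 0 ≤ gs := by
    simp only [gs]; split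
    · exact le_min (by linarith) hgmax
    · exact le_refl 0
  have hgsmax : gs ≤ gmax := by
    simp only [gs]; split
    · exact min_le_right _ _
    · exact hgmax
  have hsum : ϑs + gs ≤ ℰ := by
    simp only [gs]; split
    · have := min_le_left (ℰ - ϑs) gmax; linarith
    · linarith
  refine ⟨⟨hϑs0, hϑsΦ, hgs0, hgsmax, hsum⟩, ?_⟩
  intro g ϑ hϑ0 hϑΦ hg0 hgmax' hsum'
  have hϑE : ϑ ≤ ℰ := by linarith
  have hϑϑs : ϑ ≤ ϑs := le_min hϑΦ hϑE
  simp only [D₁, gs]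
  split
  · rename_i hA
    have h1 : ϑ + g ≤ ϑs + min (ℰ - ϑs) gmax := by
      rcases le_total (ℰ - ϑs) gmax with h | h
      · rw [min_eq_left h]; linarith
      · rw [min_eq_right h]; linarith
    nlinarith [mul_nonneg (le_of_lt (neg_pos.mpr hA)) (sub_nonneg.mpr h1),
      mul_nonneg (le_of_lt (neg_pos.mpr (by linarith : (V * T * β * κ - ℰ) - (V * T * β * η - ℰ) < 0))) (sub_nonneg.mpr hϑϑs)]
  · rename_i hA
    push_neg at hA
    nlinarith [mul_nonneg (by linarith : (0:ℝ) ≤ V * T * β * η - ℰ) hg0,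
      mul_nonneg (le_of_lt (neg_pos.mpr hcond)) (sub_nonneg.mpr hϑϑs)]
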